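/- Let $\tau_*$ and $\tau_*'$ be plane trees, $h\ge 1$ an integer, and $0<\alpha<1$. If the maximum size of a common rooted subtree satisfies $\operatorname{LCS}^\bullet(\tau_*,\tau_*')>h+1$, then at least one of the following holds: (i) there are children $v$ of the root of $\tau_*$ and $v'$ of the root of $\tau_*'$ such that $\mathrm{Ht}(\theta_v\tau_*)\wedge\mathrm{Ht}(\theta_{v'}\tau_*')\le h$ and $h^{-\alpha}\operatorname{LCS}^\bullet(\theta_v\tau_*,\theta_{v'}\tau_*') > \mathrm{Ht}(\theta_v\tau_*)\wedge\mathrm{Ht}(\theta_{v'}\tau_*')+1$; or (ii) $\big(\sum_{i=1}^{\mathrm{k}_\varnothing(\tau_*)}(1+\mathrm{Ht}(\theta_i\tau_*))\big)\wedge\big(\sum_{i=1}^{\mathrm{k}_\varnothing(\tau_*')}(1+\mathrm{Ht}(\theta_i\tau_*'))\big)>h^{1-\alpha}$. -/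

import Mathlib

inductive PlaneTree : Type where
  | node : List PlaneTree → PlaneTree

instance : MeasurableSpace PlaneTree := ⊤

namespace PlaneTree

mutual
def size : PlaneTree → ℕ
  | .node ts => 1 + sizeF ts
def sizeF : List PlaneTree → ℕ
  | [] => 0
  | t :: ts => size t + sizeF ts
end

mutual
def height : PlaneTree → ℕ
  | .node ts => heightF ts
def heightF : List PlaneTree → ℕ
  | [] => 0
  | t :: ts => max (height t + 1) (heightF ts)
end

mutual
def maxDeg : PlaneTree → ℕ
  | .node ts => max ts.length (maxDegF ts)
def maxDegF : List PlaneTree → ℕ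
  | [] => 0
  | t :: ts => max (maxDeg t) (maxDegF ts)
end

mutual
def treeProb (μ : ℕ → ℝ) : PlaneTree → ℝ
  | .node ts => μ ts.length * forestProb μ ts
def forestProb (μ : ℕ → ℝ) : List PlaneTree → ℝ
  | [] => 1
  | t :: ts => treeProb μ t * forestProb μ ts
end

/-- Law of a root-biased Bienaymé tree. -/
def rootBiasedProb (μ : ℕ → ℝ) : PlaneTree → ℝ
  | .node ts => (ts.length + 1 : ℝ) * μ (ts.length + 1) * forestProb μ ts

/-- Root-preserving embedding of plane trees (ignoring the plane order). -/
inductive Embeds : PlaneTree → PlaneTree → Prop where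
  | intro (ss ts : List PlaneTree) (f : Fin ss.length → Fin ts.length)
      (hinj : Function.Injective f)
      (h : ∀ i, Embeds (ss.get i) (ts.get (f i))) :
      Embeds (.node ss) (.node ts)

/-- Maximum size of a common rooted subtree. -/
noncomputable def LCSr (t t' : PlaneTree) : ℕ :=
  sSup {n | ∃ s : PlaneTree, s.size = n ∧ s.Embeds t ∧ s.Embeds t'}

lemma sizeF_eq_sum (ts : List PlaneTree) : sizeF ts = (ts.map size).sum := by
  induction ts with
  | nil => rfl
  | cons t ts ih => simp [sizeF, ih]

lemma sum_map_eq_sum_fin {M : Type*} [AddCommMonoid M] (ts : List PlaneTree) (g : PlaneTree → M) :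
    (ts.map g).sum = ∑ i : Fin ts.length, g (ts.get i) := by
  induction ts with
  | nil => simp
  | cons t ts ih =>
    simp only [List.map_cons, List.sum_cons, List.length_cons, Fin.sum_univ_succ]
    rw [ih]
    rfl

lemma size_le_of_embeds {s t : PlaneTree} (h : s.Embeds t) : s.size ≤ t.size := by
  induction h with
  | intro ss ts f hinj hc ih =>
    simp only [size, sizeF_eq_sum, sum_map_eq_sum_fin]
    have h1 : ∑ i : Fin ss.length, (ss.get i).size ≤ ∑ i : Fin ss.length, (ts.get (f i)).size :=
      Finset.sum_le_sum fun i _ => ih i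
    have h2 : ∑ i : Fin ss.length, (ts.get (f i)).size ≤ ∑ j : Fin ts.length, (ts.get j).size :=
      calc ∑ i : Fin ss.length, (ts.get (f i)).size
          = ∑ j ∈ Finset.univ.image f, (ts.get j).size :=
            (Finset.sum_image (f := fun j => (ts.get j).size) (fun x _ y _ h => hinj h)).symm
        _ ≤ ∑ j : Fin ts.length, (ts.get j).size :=
            Finset.sum_le_sum_of_subset (Finset.subset_univ _)
    omega

lemma embeds_nil (ts : List PlaneTree) : Embeds (.node []) (.node ts) :=
  .intro [] ts (fun i => i.elim0) (fun i => i.elim0) (fun i => i.elim0)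

lemma lcs_set_bddAbove (t t' : PlaneTree) :
    BddAbove {n | ∃ s : PlaneTree, s.size = n ∧ s.Embeds t ∧ s.Embeds t'} := by
  refine ⟨t.size, ?_⟩
  rintro n ⟨s, rfl, he, -⟩
  exact size_le_of_embeds he

lemma le_lcs {s t t' : PlaneTree} (h : s.Embeds t) (h' : s.Embeds t') : s.size ≤ LCSr t t' :=
  le_csSup (lcs_set_bddAbove t t') ⟨s, rfl, h, h'⟩

lemma lcs_comm (t t' : PlaneTree) : LCSr t t' = LCSr t' t := by
  unfold LCSr
  congr 1
  ext n
  exact ⟨fun ⟨s, a, b, c⟩ => ⟨s, a, c, b⟩, fun ⟨s, a, b, c⟩ => ⟨s, a, c, b⟩⟩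

lemma lcs_bound (ts ts' : List PlaneTree) (B : PlaneTree → ℝ)
    (hB : ∀ v ∈ ts, 0 ≤ B v)
    (hLB : ∀ v ∈ ts, ∀ v' ∈ ts', (LCSr v v' : ℝ) ≤ B v) :
    (LCSr (.node ts) (.node ts') : ℝ) ≤ 1 + (ts.map B).sum := by
  have hsum0 : 0 ≤ (ts.map B).sum := by
    apply List.sum_nonneg
    intro x hx
    obtain ⟨v, hv, rfl⟩ := List.mem_map.1 hx
    exact hB v hv
  have key : ∀ n ∈ {n | ∃ s : PlaneTree, s.size = n ∧
      s.Embeds (.node ts) ∧ s.Embeds (.node ts')}, (n : ℝ) ≤ 1 + (ts.map B).sum := by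
    rintro n ⟨s, rfl, he, he'⟩
    cases he with
    | intro ss _ f hf hce =>
    cases he' with
    | intro _ _ g hg hce' =>
    have hsz : ((PlaneTree.node ss).size : ℝ)
        = 1 + ∑ i : Fin ss.length, ((ss.get i).size : ℝ) := by
      rw [size, sizeF_eq_sum, sum_map_eq_sum_fin]
      push_cast
      ring
    have h1 : ∀ i : Fin ss.length, ((ss.get i).size : ℝ) ≤ B (ts.get (f i)) := by
      intro i
      have ha : ((ss.get i).size : ℝ) ≤ ((ts.get (f i)).LCSr (ts'.get (g i)) : ℝ) := by
        exact_mod_cast le_lcs (hce i) (hce' i)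
      exact ha.trans (hLB _ (List.get_mem ts _) _ (List.get_mem ts' _))
    have h2 : ∑ i : Fin ss.length, B (ts.get (f i)) ≤ ∑ j : Fin ts.length, B (ts.get j) :=
      calc ∑ i : Fin ss.length, B (ts.get (f i))
          = ∑ j ∈ Finset.univ.image f, B (ts.get j) :=
            (Finset.sum_image (f := fun j => B (ts.get j)) (fun x _ y _ h => hf h)).symm
        _ ≤ ∑ j : Fin ts.length, B (ts.get j) :=
            Finset.sum_le_sum_of_subset_of_nonneg (Finset.subset_univ _)
              (fun j _ _ => hB _ (List.get_mem ts _))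
    have h3 : (ts.map B).sum = ∑ j : Fin ts.length, B (ts.get j) := sum_map_eq_sum_fin ts B
    have h4 : ∑ i : Fin ss.length, ((ss.get i).size : ℝ)
        ≤ ∑ i : Fin ss.length, B (ts.get (f i)) := Finset.sum_le_sum fun i _ => h1 i
    rw [hsz, h3]
    linarith
  have hLCS : LCSr (.node ts) (.node ts') ≤ ⌊1 + (ts.map B).sum⌋₊ := by
    have hne : {n | ∃ s : PlaneTree, s.size = n ∧
        s.Embeds (.node ts) ∧ s.Embeds (.node ts')}.Nonempty :=
      ⟨1, PlaneTree.node [], by rw [size, sizeF], embeds_nil ts, embeds_nil ts'⟩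
    apply csSup_le hne
    intro n hn
    exact Nat.le_floor (key n hn)
  calc (LCSr (.node ts) (.node ts') : ℝ) ≤ (⌊1 + (ts.map B).sum⌋₊ : ℝ) := by exact_mod_cast hLCS
    _ ≤ 1 + (ts.map B).sum := Nat.floor_le (by linarith)

lemma sum_map_aux (ts : List PlaneTree) (c : ℝ) :
    (ts.map (fun v => c * (1 + (v.height : ℝ)))).sum
      = c * (((ts.map (fun t => 1 + t.height)).sum : ℕ) : ℝ) := by
  induction ts with
  | nil => simp
  | cons t ts ih =>
    simp only [List.map_cons, List.sum_cons, ih]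
    push_cast
    ring

lemma lcs_key (ts ts' : List PlaneTree) (h : ℕ) (hh : 1 ≤ h)
    (α : ℝ) (hα0 : 0 < α) (hα1 : α < 1)
    (hbig : h + 1 < LCSr (.node ts) (.node ts'))
    (hsum : (((ts.map (fun t => 1 + t.height)).sum : ℕ) : ℝ) ≤ (h : ℝ) ^ ((1 : ℝ) - α)) :
    ∃ v ∈ ts, ∃ v' ∈ ts',
      min v.height v'.height ≤ h ∧
      ((min v.height v'.height : ℕ) : ℝ) + 1 < (h : ℝ) ^ (-α) * (LCSr v v' : ℝ) := by
  by_contra hno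
  push_neg at hno
  have hhpos : (0 : ℝ) < h := by exact_mod_cast hh
  have hh1 : (1 : ℝ) ≤ h := by exact_mod_cast hh
  have hle : (h : ℝ) ^ ((1 : ℝ) - α) ≤ h := by
    calc (h : ℝ) ^ ((1 : ℝ) - α) ≤ (h : ℝ) ^ (1 : ℝ) :=
          Real.rpow_le_rpow_of_exponent_le hh1 (by linarith)
      _ = h := Real.rpow_one _
  have hcancel : (h : ℝ) ^ α * (h : ℝ) ^ (-α) = 1 := by
    rw [← Real.rpow_add hhpos]
    simp
  -- every v ∈ ts has 1 + height ≤ h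
  have hht : ∀ v ∈ ts, 1 + v.height ≤ h := by
    intro v hv
    have hmem : 1 + v.height ∈ ts.map (fun t => 1 + t.height) :=
      List.mem_map_of_mem hv
    have h1 : 1 + v.height ≤ (ts.map (fun t => 1 + t.height)).sum :=
      List.single_le_sum (fun _ _ => Nat.zero_le _) _ hmem
    have h2 : ((1 + v.height : ℕ) : ℝ) ≤ (h : ℝ) := by
      calc ((1 + v.height : ℕ) : ℝ) ≤ (((ts.map (fun t => 1 + t.height)).sum : ℕ) : ℝ) := by
            exact_mod_cast h1
        _ ≤ (h : ℝ) ^ ((1 : ℝ) - α) := hsum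
        _ ≤ h := hle
    exact_mod_cast h2
  have hLB : ∀ v ∈ ts, ∀ v' ∈ ts',
      (LCSr v v' : ℝ) ≤ (h : ℝ) ^ α * (1 + (v.height : ℝ)) := by
    intro v hv v' hv'
    have hmin : min v.height v'.height ≤ h :=
      le_trans (min_le_left _ _) (by have := hht v hv; omega)
    have h1 := hno v hv v' hv' hmin
    have h2 := mul_le_mul_of_nonneg_left h1 (le_of_lt (Real.rpow_pos_of_pos hhpos α))
    rw [← mul_assoc, hcancel, one_mul] at h2
    refine h2.trans ?_
    have h3 : ((min v.height v'.height : ℕ) : ℝ) ≤ (v.height : ℝ) := by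
      exact_mod_cast min_le_left v.height v'.height
    have h4 : (0 : ℝ) ≤ (h : ℝ) ^ α := le_of_lt (Real.rpow_pos_of_pos hhpos α)
    nlinarith
  have hbound := lcs_bound ts ts' (fun v => (h : ℝ) ^ α * (1 + (v.height : ℝ)))
    (fun v _ => by positivity) hLB
  rw [sum_map_aux] at hbound
  have h5 : (h : ℝ) ^ α * (((ts.map (fun t => 1 + t.height)).sum : ℕ) : ℝ)
      ≤ (h : ℝ) ^ α * ((h : ℝ) ^ ((1 : ℝ) - α)) :=
    mul_le_mul_of_nonneg_left hsum (le_of_lt (Real.rpow_pos_of_pos hhpos α))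
  have h6 : (h : ℝ) ^ α * ((h : ℝ) ^ ((1 : ℝ) - α)) = h := by
    rw [← Real.rpow_add hhpos]
    simp
  have hbig' : (h : ℝ) + 1 < (LCSr (.node ts) (.node ts') : ℝ) := by exact_mod_cast hbig
  linarith

end PlaneTree

open PlaneTree in
/-- Deterministic breakdown: if the largest common rooted subtree of two trees is
larger than `h+1`, then either a pair of root-children subtrees is bad, or both
sums of `1 + height` over root-children subtrees exceed `h^(1-α)`. -/
theorem lcs_rooted_cases (ts ts' : List PlaneTree) (h : ℕ) (hh : 1 ≤ h)
    (α : ℝ) (hα0 : 0 < α) (hα1 : α < 1)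
    (hbig : h + 1 < LCSr (.node ts) (.node ts')) :
    (∃ v ∈ ts, ∃ v' ∈ ts',
        min v.height v'.height ≤ h ∧
        ((min v.height v'.height : ℕ) : ℝ) + 1 < (h : ℝ) ^ (-α) * (LCSr v v' : ℝ)) ∨
    ((h : ℝ) ^ ((1 : ℝ) - α) <
        min (((ts.map (fun t => 1 + t.height)).sum : ℕ) : ℝ)
            (((ts'.map (fun t => 1 + t.height)).sum : ℕ) : ℝ)) := by
  by_contra hcon
  push_neg at hcon
  obtain ⟨h1, h2⟩ := hcon
  rw [min_le_iff] at h2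
  rcases h2 with h2 | h2
  · obtain ⟨v, hv, v', hv', hmin, hlt⟩ := lcs_key ts ts' h hh α hα0 hα1 hbig h2
    have := h1 v hv v' hv' hmin
    linarith
  · have hbig' : h + 1 < LCSr (.node ts') (.node ts) := by rwa [lcs_comm]
    obtain ⟨v', hv', v, hv, hmin, hlt⟩ := lcs_key ts' ts h hh α hα0 hα1 hbig' h2
    rw [min_comm, lcs_comm] at hlt
    rw [min_comm] at hmin
    have := h1 v hv v' hv' hmin
    linarith
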